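/- arXiv:1302.0443 — 2 statements merged into one kernel-verified Lean document; each statement's English description precedes it below -/
import Mathlib

section
/- Let V be a finite-dimensional vector space over a field F with more than two elements. Then every linear endomorphism of V is a sum of two linear automorphisms. -/
/-!
Fix a basis and work with matrices. Over a field with at least three elements, for every
scalar `x` there is a `y ∉ {0, x}`. Given a square matrix `A`, let `B` be its strictly lower part with
diagonal entries `y (A i i)`; then `B` and `A - B` are triangular with nonzero diagonals, hence
invertible.
-/

theorem exists_ne_ne_of_three_distinct {α : Type*} {a b c : α} (hab : a ≠ b) (hac : a ≠ c)
    (hbc : b ≠ c) (x y : α) : ∃ z, z ≠ x ∧ z ≠ y := by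
  by_contra! h
  have := h a; have := h b; have := h c
  by_cases a = x <;> by_cases b = x <;> grind

theorem exists_isUnit_isUnit_sub_of_three_distinct {K : Type*} [Field K]
    (hK : ∃ a b c : K, a ≠ b ∧ a ≠ c ∧ b ≠ c) (x : K) : ∃ y, IsUnit y ∧ IsUnit (x - y) := by
  obtain ⟨a, b, c, hab, hac, hbc⟩ := hK
  obtain ⟨y, hy0, hyx⟩ := exists_ne_ne_of_three_distinct hab hac hbc 0 x
  exact ⟨y, hy0.isUnit, (sub_ne_zero.mpr hyx.symm).isUnit⟩

namespace Matrix

variable {m R : Type*} [Fintype m] [LinearOrder m] [CommRing R]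

theorem IsUpperTriangular.isUnit {M : Matrix m m R} (hM : M.IsUpperTriangular)
    (hdiag : ∀ i, IsUnit (M i i)) : IsUnit M := by
  rw [isUnit_iff_isUnit_det, det_of_isUpperTriangular hM]
  exact IsUnit.prod_univ_iff.mpr hdiag

theorem IsLowerTriangular.isUnit {M : Matrix m m R} (hM : M.IsLowerTriangular)
    (hdiag : ∀ i, IsUnit (M i i)) : IsUnit M := by
  rw [isUnit_iff_isUnit_det, det_of_isLowerTriangular M hM]
  exact IsUnit.prod_univ_iff.mpr hdiag

theorem exists_isUnit_add_isUnit (hR : ∀ x : R, ∃ y, IsUnit y ∧ IsUnit (x - y))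
    (A : Matrix m m R) : ∃ B C : Matrix m m R, IsUnit B ∧ IsUnit C ∧ A = B + C := by
  choose d hd hAd using hR
  let B : Matrix m m R := of fun i j => if j < i then A i j else if i = j then d (A i i) else 0
  have hB : B.IsLowerTriangular := fun i j hij => by
    have hij : i < j := OrderDual.toDual_lt_toDual.mp hij
    simp [B, hij.not_gt, hij.ne]
  have hC : (A - B).IsUpperTriangular := fun i j (hij : j < i) => by simp [B, hij]
  refine ⟨B, A - B, hB.isUnit fun i => by simpa [B] using hd _,
    hC.isUnit fun i => by simpa [B] using hAd _, (add_sub_cancel B A).symm⟩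

end Matrix

/-- Over a field `F` with more than two elements, every linear endomorphism of a
finite-dimensional `F`-vector space is a sum of two linear automorphisms. -/
theorem sum_two_automorphisms_of_finiteDimensional (F V : Type*) [Field F] [AddCommGroup V]
    [Module F V] [FiniteDimensional F V]
    (hF : ∃ a b c : F, a ≠ b ∧ a ≠ c ∧ b ≠ c) :
    ∀ f : Module.End F V, ∃ u v : (Module.End F V)ˣ, f = ↑u + ↑v := by
  intro f
  let e := algEquivMatrix (Module.finBasis F V)
  obtain ⟨B, C, hB, hC, hBC⟩ :=
    Matrix.exists_isUnit_add_isUnit (exists_isUnit_isUnit_sub_of_three_distinct hF) (e f)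
  refine ⟨(hB.map e.symm).unit, (hC.map e.symm).unit, ?_⟩
  simp [← map_add, ← hBC]
end

section
/- Let M ⊆ E be R-modules with E injective and M essential in E. If End_R(E) admits a ring homomorphism to 𝔽₂, then so does End_R(M). Equivalently (contrapositive): if End_R(M) has no factor ring isomorphic to 𝔽₂, then End_R(E(M)) has no factor ring isomorphic to 𝔽₂. -/
/-- Let `N` be an essential submodule of an injective module `E` (so `E` is an injective hull
of `N`).  Any ring homomorphism `End(E) → 𝔽₂` yields a ring homomorphism `End(N) → 𝔽₂`;
equivalently, if `End(N)` has no factor ring `𝔽₂` then neither does `End(E)`. -/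
theorem end_injectiveHull_ringHom_to_F2 (R E : Type*) [Ring R]
    [AddCommGroup E] [Module R E] [Module.Injective R E] (N : Submodule R E)
    (hess : ∀ K : Submodule R E, K ⊓ N = ⊥ → K = ⊥)
    (h : Nonempty (Module.End R E →+* ZMod 2)) :
    Nonempty (Module.End R ↥N →+* ZMod 2) := by
  obtain ⟨g⟩ := h
  -- Key: any endomorphism of `E` vanishing on `N` is killed by `g`.
  have key : ∀ ψ : Module.End R E, (∀ x : N, ψ (x : E) = 0) → g ψ = 0 := by
    intro ψ hψ
    set u : Module.End R E := 1 - ψ with hu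
    have hker : LinearMap.ker u ⊓ N = ⊥ := by
      rw [eq_bot_iff]
      rintro x ⟨hx1, hx2⟩
      have h1 : x - ψ x = 0 := hx1
      have h2 : ψ x = 0 := hψ ⟨x, hx2⟩
      simpa [h2] using h1
    have hinj : Function.Injective u := by
      rw [← LinearMap.ker_eq_bot]
      exact hess _ hker
    obtain ⟨σ, hσ⟩ := Module.Injective.out (u : E →ₗ[R] E) hinj (LinearMap.id : E →ₗ[R] E)
    have hmul : σ * u = 1 := by
      ext x; exact hσ x
    have hgu : g σ * g u = 1 := by rw [← map_mul, hmul, map_one]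
    have h2 : ∀ a b : ZMod 2, a * b = 1 → b = 1 := by decide
    have : g u = 1 := h2 _ _ hgu
    have : g 1 - g ψ = 1 := by rw [← map_sub]; exact this
    simpa using this
  -- Extend any endomorphism of `N` to an endomorphism of `E`.
  have ext : ∀ f : Module.End R ↥N, ∃ φ : Module.End R E,
      ∀ x : N, φ (x : E) = (f x : E) := by
    intro f
    obtain ⟨φ, hφ⟩ := Module.Injective.out N.subtype Subtype.val_injective
      (N.subtype ∘ₗ f)
    exact ⟨φ, fun x => hφ x⟩
  choose φ hφ using ext
  have diff : ∀ (f : Module.End R ↥N) (ψ : Module.End R E),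
      (∀ x : N, ψ (x : E) = (f x : E)) → g ψ = g (φ f) := by
    intro f ψ hsp
    have h0 : g (ψ - φ f) = 0 := key _ (fun x => by
      simp [LinearMap.sub_apply, hsp x, hφ f x])
    rw [map_sub] at h0
    exact sub_eq_zero.mp h0
  refine ⟨{ toFun := fun f => g (φ f),
            map_one' := ?_, map_mul' := ?_, map_zero' := ?_, map_add' := ?_ }⟩
  · have : g (1 : Module.End R E) = g (φ 1) := diff 1 1 (fun x => by simp)
    show g (φ 1) = 1
    rw [← this, map_one]
  · intro f f'
    have : g (φ f * φ f') = g (φ (f * f')) := by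
      refine diff (f * f') (φ f * φ f') (fun x => ?_)
      have h1 : (φ f') (x : E) = (f' x : E) := hφ f' x
      have h2 : (φ f) ((f' x : E)) = (f (f' x) : E) := hφ f (f' x)
      simp [Module.End.mul_apply, h1, h2]
    show g (φ (f * f')) = g (φ f) * g (φ f')
    rw [← this, map_mul]
  · have : g (0 : Module.End R E) = g (φ 0) := diff 0 0 (fun x => by simp)
    show g (φ 0) = 0
    rw [← this, map_zero]
  · intro f f'
    have : g (φ f + φ f') = g (φ (f + f')) := by
      refine diff (f + f') (φ f + φ f') (fun x => ?_)
      simp [LinearMap.add_apply, hφ f x, hφ f' x]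
    show g (φ (f + f')) = g (φ f) + g (φ f')
    rw [← this, map_add]
end
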